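/- For every z in the unit sphere S^{2m−1} ⊂ ℂ^m: ⟨[Y_l, Y_{l'}](z), X(z)⟩ = 0 for all 1 ≤ l, l' ≤ m−1; ⟨[W_p, W_{p'}](z), X(z)⟩ = 0 for all 1 ≤ p, p' ≤ m−1; and ⟨[Y_l, W_p](z), X(z)⟩ = 0 whenever 1 ≤ l < p ≤ m−1. -/

import Mathlib

open scoped BigOperators ComplexConjugate

/-- The real inner product on `ℂ^m`: `⟨v,w⟩ = Re ∑_k v_k · conj (w_k)`. -/
noncomputable def rinner {m : ℕ} (v w : Fin m → ℂ) : ℝ :=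
  (∑ k : Fin m, v k * conj (w k)).re

/-- The vector field `X(z) = (iθ₁z₁,…,iθ_m z_m)` generating the flow. -/
noncomputable def sphX {m : ℕ} (θ : Fin m → ℝ) (z : Fin m → ℂ) : Fin m → ℂ :=
  fun k => Complex.I * (θ k : ℂ) * z k

/-- The vector field `Y_l` (here `l` is a 0-based index; the paper's `Y_l` for
`1 ≤ l ≤ m−1` corresponds to indices `l` with `(l:ℕ)+1 < m`): its components are `0` below `l`,
`−(∑_{k>l}|z_k|²)·z_l` at `l`, and `|z_l|²·z_k` above `l`. -/
noncomputable def sphY {m : ℕ} (l : Fin m) (z : Fin m → ℂ) : Fin m → ℂ := fun k =>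
  if (k : ℕ) < (l : ℕ) then 0
  else if k = l then
    -(((∑ j ∈ Finset.univ.filter (fun j : Fin m => (l : ℕ) < (j : ℕ)), ‖z j‖ ^ 2 : ℝ) : ℂ)) * z l
  else ((‖z l‖ ^ 2 : ℝ) : ℂ) * z k

/-- The generic vector field `W_p` (0-based index `p`; the paper's `W_p` for `1 ≤ p ≤ m−2`
corresponds to indices `p` with `(p:ℕ)+2 < m`): components `0` below `p`,
`−(∑_{k>p}θ_k²|z_k|²)·i z_p` at `p`, and `θ_p θ_k |z_p|²·i z_k` above `p`. -/
noncomputable def sphW {m : ℕ} (θ : Fin m → ℝ) (p : Fin m) (z : Fin m → ℂ) : Fin m → ℂ := fun k =>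
  if (k : ℕ) < (p : ℕ) then 0
  else if k = p then
    -(((∑ j ∈ Finset.univ.filter (fun j : Fin m => (p : ℕ) < (j : ℕ)),
        (θ j) ^ 2 * ‖z j‖ ^ 2 : ℝ) : ℂ)) * (Complex.I * z p)
  else (((θ p) * (θ k) * ‖z p‖ ^ 2 : ℝ) : ℂ) * (Complex.I * z k)

/-- The special last vector field `W_{m−1}`, with `a` the index `m−2` and `b` the index `m−1`
(0-based): component `−θ_b|z_b|²·i z_a` at `a`, `θ_a|z_a|²·i z_b` at `b`, and `0` elsewhere. -/
noncomputable def sphWlast {m : ℕ} (θ : Fin m → ℝ) (a b : Fin m) (z : Fin m → ℂ) :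
    Fin m → ℂ := fun k =>
  if k = a then -(((θ b * ‖z b‖ ^ 2 : ℝ)) : ℂ) * (Complex.I * z a)
  else if k = b then (((θ a * ‖z a‖ ^ 2 : ℝ)) : ℂ) * (Complex.I * z b)
  else 0

/-- The full family `W_p`, `1 ≤ p ≤ m−1` (0-based: `(p:ℕ)+1 < m`): the generic `W_p` for
`p ≤ m−2` and the special `W_{m−1}` for the last index. -/
noncomputable def sphWfull {m : ℕ} (hm : 2 ≤ m) (θ : Fin m → ℝ) (p : Fin m) :
    (Fin m → ℂ) → (Fin m → ℂ) :=
  if (p : ℕ) = m - 2 then sphWlast θ ⟨m - 2, by omega⟩ ⟨m - 1, by omega⟩ else sphW θ p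

/-- The Lie bracket `[U,V](z) = (DV)_z(U(z)) − (DU)_z(V(z))` of vector fields on `ℂ^m`,
`D` being the Fréchet derivative over `ℝ`. -/
noncomputable def bracket {m : ℕ} (U V : (Fin m → ℂ) → (Fin m → ℂ)) (z : Fin m → ℂ) :
    Fin m → ℂ :=
  fderiv ℝ V z (U z) - fderiv ℝ U z (V z)

/-!
Every field in question is diagonal: its `k`-th component is `c_k(z) · μ · z_k` with a constant
`μ ∈ {1, i}` and `c = A q(z)` real-linear in `q(z) = (|z_j|²)_j`. In the bracket of two such
fields the terms `c_k c'_k` cancel, and `Dq_z(c · μ · z) = 2 Re μ · c q`, so the bracket is again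
diagonal with real coefficients in front of `μ z` and `ν z`. Hence it is orthogonal to
`X = iθz` when `μ = ν = 1`, and it vanishes when `μ = ν = i`. For `l < p` the coefficient of `Y_l`
equals `|z_l|²` at every index `≥ p`, which are the only ones `W_p` reads, so
`[Y_l, W_p] = 2|z_l|² W_p`; finally `W_p ⊥ X` because its coefficient matrix `B` satisfies
`θ_i B_ij = -θ_j B_ji`.
-/

open Complex Matrix

section Skew

variable {n R : Type*} [Fintype n]

lemma mulVec_mul_eq_smul_mulVec [CommSemiring R] {B : Matrix n n R} {r v : n → R} {ρ : R}
    (h : ∀ k j, B k j ≠ 0 → r j = ρ) : B *ᵥ (r * v) = ρ • B *ᵥ v := by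
  ext k
  simp only [mulVec, dotProduct, Pi.mul_apply, Pi.smul_apply, smul_eq_mul, Finset.mul_sum]
  refine Finset.sum_congr rfl fun j _ => ?_
  by_cases hkj : B k j = 0
  · simp [hkj]
  · rw [h k j hkj]; ring

lemma dotProduct_mul_mulVec_self_eq_zero [CommRing R] [NoZeroDivisors R] [CharZero R]
    {θ v : n → R} {B : Matrix n n R} (h : ∀ i j, θ i * B i j = -(θ j * B j i)) :
    (θ * v) ⬝ᵥ B *ᵥ v = 0 := by
  set S := (θ * v) ⬝ᵥ B *ᵥ v
  have hS : S = ∑ i, ∑ j, θ i * B i j * (v i * v j) := by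
    simp only [S, dotProduct, mulVec, Pi.mul_apply, Finset.mul_sum]
    refine Finset.sum_congr rfl fun i _ => Finset.sum_congr rfl fun j _ => ?_
    ring
  have : S = -S := calc
    S = ∑ i, ∑ j, -(θ j * B j i * (v j * v i)) := by
      rw [hS]
      refine Finset.sum_congr rfl fun i _ => Finset.sum_congr rfl fun j _ => ?_
      rw [h]; ring
    _ = -S := by rw [hS, Finset.sum_comm]; simp only [Finset.sum_neg_distrib]
  exact add_self_eq_zero.1 (by linear_combination this)

end Skew

section DiagonalFields

variable {m : ℕ}

noncomputable def sqNorms (z : Fin m → ℂ) : Fin m → ℝ := fun j => ‖z j‖ ^ 2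

noncomputable def sqNormsDeriv (z : Fin m → ℂ) : (Fin m → ℂ) →L[ℝ] (Fin m → ℝ) :=
  ContinuousLinearMap.pi fun j => (2 • innerSL ℝ (z j)).comp (ContinuousLinearMap.proj j)

noncomputable def ofRealVec : (Fin m → ℝ) →L[ℝ] (Fin m → ℂ) :=
  ContinuousLinearMap.pi fun k => ofRealCLM.comp (ContinuousLinearMap.proj k)

@[simp] lemma ofRealVec_apply (r : Fin m → ℝ) (k : Fin m) : ofRealVec r k = r k := rfl

noncomputable def diagField (μ : ℂ) (A : Matrix (Fin m) (Fin m) ℝ) (z : Fin m → ℂ) :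
    Fin m → ℂ :=
  ofRealVec (A *ᵥ sqNorms z) * μ • z

lemma hasFDerivAt_sqNorms (z : Fin m → ℂ) : HasFDerivAt sqNorms (sqNormsDeriv z) z :=
  hasFDerivAt_pi'.2 fun j => by
    exact (hasStrictFDerivAt_norm_sq (z j)).hasFDerivAt.comp z (hasFDerivAt_apply (𝕜 := ℝ) j z)

lemma sqNormsDeriv_ofRealVec_mul_smul_self (z : Fin m → ℂ) (r : Fin m → ℝ) (μ : ℂ) :
    sqNormsDeriv z (ofRealVec r * μ • z) = (2 * μ.re) • (r * sqNorms z) := by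
  ext j
  simp only [sqNormsDeriv, ContinuousLinearMap.smul_comp, Algebra.mul_smul_comm,
    ContinuousLinearMap.coe_pi', _root_.smul_apply, ContinuousLinearMap.comp_apply,
    ContinuousLinearMap.proj_apply, Pi.smul_apply, Pi.mul_apply, ofRealVec_apply, smul_eq_mul,
    coe_innerSL_apply, Complex.inner, mul_re, ofReal_re, ofReal_im, zero_mul, sub_zero, mul_im,
    add_zero, conj_re, conj_im, mul_neg, sub_neg_eq_add, smul_add, nsmul_eq_mul, Nat.cast_ofNat,
    sqNorms, Complex.sq_norm, normSq_apply]
  ring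

lemma hasFDerivAt_ofRealVec_mulVec_sqNorms (A : Matrix (Fin m) (Fin m) ℝ) (z : Fin m → ℂ) :
    HasFDerivAt (fun z => ofRealVec (A *ᵥ sqNorms z))
      (ofRealVec.comp ((mulVecLin A).toContinuousLinearMap.comp (sqNormsDeriv z))) z :=
  (ofRealVec.comp (mulVecLin A).toContinuousLinearMap).hasFDerivAt.comp z (hasFDerivAt_sqNorms z)

lemma bracket_mul_smul_self {c d : (Fin m → ℂ) → Fin m → ℂ}
    {c' d' : (Fin m → ℂ) →L[ℝ] Fin m → ℂ} {z : Fin m → ℂ} (μ ν : ℂ)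
    (hc : HasFDerivAt c c' z) (hd : HasFDerivAt d d' z) :
    bracket (fun z => c z * μ • z) (fun z => d z * ν • z) z
      = d' (c z * μ • z) * ν • z - c' (d z * ν • z) * μ • z := by
  have hsmul (κ : ℂ) :
      HasFDerivAt (fun z : Fin m → ℂ => κ • z) (κ • ContinuousLinearMap.id ℝ _) z :=
    (hasFDerivAt_id z).const_smul κ
  rw [bracket, (hc.fun_mul (hsmul μ)).fderiv, (hd.fun_mul (hsmul ν)).fderiv]
  ext k
  simp only [Pi.sub_apply, Pi.add_apply, Pi.mul_apply, Pi.smul_apply, smul_eq_mul,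
    _root_.add_apply, _root_.smul_apply, ContinuousLinearMap.id_apply]
  ring

lemma bracket_diagField (μ ν : ℂ) (A B : Matrix (Fin m) (Fin m) ℝ) (z : Fin m → ℂ) :
    bracket (diagField μ A) (diagField ν B) z
      = ofRealVec ((2 * μ.re) • B *ᵥ (A *ᵥ sqNorms z * sqNorms z)) * ν • z
        - ofRealVec ((2 * ν.re) • A *ᵥ (B *ᵥ sqNorms z * sqNorms z)) * μ • z := by
  unfold diagField
  rw [bracket_mul_smul_self μ ν (hasFDerivAt_ofRealVec_mulVec_sqNorms A z)
    (hasFDerivAt_ofRealVec_mulVec_sqNorms B z)]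
  simp only [ContinuousLinearMap.comp_apply, sqNormsDeriv_ofRealVec_mul_smul_self]
  simp

lemma bracket_diagField_I (A B : Matrix (Fin m) (Fin m) ℝ) (z : Fin m → ℂ) :
    bracket (diagField I A) (diagField I B) z = 0 := by
  simp [bracket_diagField]

lemma rinner_sub (v w u : Fin m → ℂ) : rinner (v - w) u = rinner v u - rinner w u := by
  simp only [rinner, Pi.sub_apply, sub_mul, Finset.sum_sub_distrib, Complex.sub_re]

lemma rinner_ofReal_smul (c : ℝ) (v w : Fin m → ℂ) :
    rinner ((c : ℂ) • v) w = c * rinner v w := by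
  simp [rinner, Finset.mul_sum, Complex.re_sum, mul_assoc]

lemma rinner_ofRealVec_mul_smul_sphX (r : Fin m → ℝ) (μ : ℂ) (θ : Fin m → ℝ) (z : Fin m → ℂ) :
    rinner (ofRealVec r * μ • z) (sphX θ z) = μ.im * ((θ * sqNorms z) ⬝ᵥ r) := by
  simp only [rinner, Complex.re_sum, dotProduct, Finset.mul_sum]
  refine Finset.sum_congr rfl fun k _ => ?_
  simp [sphX, sqNorms, Complex.sq_norm, Complex.normSq_apply]
  ring

lemma rinner_bracket_diagField_one_sphX (A B : Matrix (Fin m) (Fin m) ℝ) (θ : Fin m → ℝ)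
    (z : Fin m → ℂ) : rinner (bracket (diagField 1 A) (diagField 1 B) z) (sphX θ z) = 0 := by
  rw [bracket_diagField, rinner_sub, rinner_ofRealVec_mul_smul_sphX,
    rinner_ofRealVec_mul_smul_sphX, one_im, zero_mul, zero_mul, sub_zero]

lemma rinner_diagField_sphX_eq_zero {B : Matrix (Fin m) (Fin m) ℝ} {θ : Fin m → ℝ}
    (hB : ∀ i j, θ i * B i j = -(θ j * B j i)) (μ : ℂ) (z : Fin m → ℂ) :
    rinner (diagField μ B z) (sphX θ z) = 0 := by
  rw [diagField, rinner_ofRealVec_mul_smul_sphX, dotProduct_mul_mulVec_self_eq_zero hB, mul_zero]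

end DiagonalFields

section Coefficients

variable {m : ℕ}

def yCoeff (l : Fin m) : Matrix (Fin m) (Fin m) ℝ := Matrix.of fun k j =>
  if k = l then (if l < j then -1 else 0) else if l < k ∧ j = l then 1 else 0

lemma sphY_eq_diagField (l : Fin m) : sphY l = diagField 1 (yCoeff l) := by
  funext z k
  simp only [sphY, diagField, yCoeff, Pi.mul_apply, Pi.smul_apply, ofRealVec_apply, mulVec,
    dotProduct, of_apply, sqNorms, smul_eq_mul, one_mul]
  rcases lt_trichotomy k l with hkl | rfl | hlk
  · simp [hkl.ne, not_lt_of_gt hkl, Fin.lt_def.1 hkl]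
  · simp [Finset.sum_filter, ← Finset.sum_neg_distrib, apply_ite ((↑) : ℝ → ℂ), neg_ite]
  · simp [hlk, hlk.ne', not_lt_of_gt (Fin.lt_def.1 hlk)]

lemma yCoeff_mulVec_of_lt {l j : Fin m} (v : Fin m → ℝ) (hlj : l < j) :
    (yCoeff l *ᵥ v) j = v l := by
  simp [yCoeff, mulVec, dotProduct, hlj, hlj.ne']

lemma bracket_yField_diagField_I {l p : Fin m} (hlp : l < p) {B : Matrix (Fin m) (Fin m) ℝ}
    (hB : ∀ k j, B k j ≠ 0 → p ≤ j) (z : Fin m → ℂ) :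
    bracket (diagField 1 (yCoeff l)) (diagField I B) z
      = ((2 * ‖z l‖ ^ 2 : ℝ) : ℂ) • diagField I B z := by
  have hcoeff : B *ᵥ (yCoeff l *ᵥ sqNorms z * sqNorms z) = ‖z l‖ ^ 2 • B *ᵥ sqNorms z :=
    mulVec_mul_eq_smul_mulVec fun k j h => yCoeff_mulVec_of_lt _ (hlp.trans_le (hB k j h))
  rw [bracket_diagField, hcoeff]
  ext k
  simp only [one_re, mul_one, I_re, mul_zero, zero_smul, map_zero, zero_mul, sub_zero,
    Pi.smul_apply, Pi.mul_apply, ofRealVec_apply, ofReal_pow, ofReal_ofNat,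
    smul_eq_mul, ofReal_mul, diagField]
  ring

def wCoeff (θ : Fin m → ℝ) (p : Fin m) : Matrix (Fin m) (Fin m) ℝ := Matrix.of fun k j =>
  if k = p then (if p < j then -θ j ^ 2 else 0) else if p < k ∧ j = p then θ p * θ k else 0

lemma sphW_eq_diagField (θ : Fin m → ℝ) (p : Fin m) : sphW θ p = diagField I (wCoeff θ p) := by
  funext z k
  simp only [sphW, diagField, wCoeff, Pi.mul_apply, Pi.smul_apply, ofRealVec_apply, mulVec,
    dotProduct, of_apply, sqNorms, smul_eq_mul]
  rcases lt_trichotomy k p with hkp | rfl | hpk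
  · simp [hkp.ne, not_lt_of_gt hkp, Fin.lt_def.1 hkp]
  · simp [Finset.sum_filter, ← Finset.sum_neg_distrib, apply_ite ((↑) : ℝ → ℂ), neg_ite]
  · simp [hpk, hpk.ne', not_lt_of_gt (Fin.lt_def.1 hpk)]

lemma wCoeff_skew (θ : Fin m → ℝ) (p : Fin m) (i j : Fin m) :
    θ i * wCoeff θ p i j = -(θ j * wCoeff θ p j i) := by
  simp only [wCoeff, of_apply]
  split_ifs <;> subst_vars <;> first | ring1 | grind

lemma le_of_wCoeff_ne_zero {θ : Fin m → ℝ} {p k j : Fin m} (h : wCoeff θ p k j ≠ 0) : p ≤ j := by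
  simp only [wCoeff, of_apply] at h
  split_ifs at h <;> grind

def wLastCoeff (θ : Fin m → ℝ) (a b : Fin m) : Matrix (Fin m) (Fin m) ℝ := Matrix.of fun k j =>
  if k = a then (if j = b then -θ b else 0) else if k = b then (if j = a then θ a else 0) else 0

lemma sphWlast_eq_diagField (θ : Fin m → ℝ) (a b : Fin m) :
    sphWlast θ a b = diagField I (wLastCoeff θ a b) := by
  funext z k
  simp only [sphWlast, diagField, wLastCoeff, Pi.mul_apply, Pi.smul_apply, ofRealVec_apply,
    mulVec, dotProduct, of_apply, sqNorms, smul_eq_mul]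
  by_cases hka : k = a
  · simp [hka]
  · by_cases hkb : k = b
    · subst hkb; simp [hka]
    · simp [hka, hkb]

lemma wLastCoeff_skew (θ : Fin m → ℝ) {a b : Fin m} (hab : a ≠ b) (i j : Fin m) :
    θ i * wLastCoeff θ a b i j = -(θ j * wLastCoeff θ a b j i) := by
  simp only [wLastCoeff, of_apply]
  split_ifs <;> subst_vars <;> first | ring1 | grind

lemma le_of_wLastCoeff_ne_zero {θ : Fin m → ℝ} {a b k j : Fin m} (hab : a ≤ b)
    (h : wLastCoeff θ a b k j ≠ 0) : a ≤ j := by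
  simp only [wLastCoeff, of_apply] at h
  split_ifs at h <;> grind

lemma sphWfull_eq_diagField (hm : 2 ≤ m) (θ : Fin m → ℝ) (p : Fin m) :
    ∃ B, sphWfull hm θ p = diagField I B ∧ (∀ i j, θ i * B i j = -(θ j * B j i))
      ∧ ∀ k j, B k j ≠ 0 → p ≤ j := by
  unfold sphWfull
  split_ifs with hp
  · refine ⟨_, sphWlast_eq_diagField _ _ _, wLastCoeff_skew θ (by simp [Fin.ext_iff]; omega),
      fun k j hkj => ?_⟩
    have := le_of_wLastCoeff_ne_zero (by simp [Fin.le_def]; omega) hkj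
    simpa [Fin.le_def, hp] using this
  · exact ⟨_, sphW_eq_diagField θ p, wCoeff_skew θ p, fun _ _ => le_of_wCoeff_ne_zero⟩

end Coefficients

/-- The remaining brackets are orthogonal to `X` on the unit sphere:
`⟨[Y_l,Y_{l'}](z),X(z)⟩ = 0`, `⟨[W_p,W_{p'}](z),X(z)⟩ = 0`, and `⟨[Y_l,W_p](z),X(z)⟩ = 0`
whenever `l < p` (0-based indices, ranges as in the paper, `W` including the special last one). -/
theorem stmt16 {m : ℕ} (hm : 2 ≤ m) (θ : Fin m → ℝ)
    (z : Fin m → ℂ) :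
    (∀ l l' : Fin m, (l : ℕ) + 1 < m → (l' : ℕ) + 1 < m →
      rinner (bracket (sphY l) (sphY l') z) (sphX θ z) = 0)
    ∧ (∀ p p' : Fin m, (p : ℕ) + 1 < m → (p' : ℕ) + 1 < m →
      rinner (bracket (sphWfull hm θ p) (sphWfull hm θ p') z) (sphX θ z) = 0)
    ∧ (∀ l p : Fin m, l < p → (p : ℕ) + 1 < m →
      rinner (bracket (sphY l) (sphWfull hm θ p) z) (sphX θ z) = 0) := by
  refine ⟨fun l l' _ _ => ?_, fun p p' _ _ => ?_, fun l p hlp _ => ?_⟩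
  · rw [sphY_eq_diagField, sphY_eq_diagField]
    exact rinner_bracket_diagField_one_sphX _ _ θ z
  · obtain ⟨B, hB, -⟩ := sphWfull_eq_diagField hm θ p
    obtain ⟨B', hB', -⟩ := sphWfull_eq_diagField hm θ p'
    simp [hB, hB', bracket_diagField_I, rinner]
  · obtain ⟨B, hWB, hskew, hsupp⟩ := sphWfull_eq_diagField hm θ p
    rw [sphY_eq_diagField, hWB, bracket_yField_diagField_I hlp hsupp, rinner_ofReal_smul,
      rinner_diagField_sphX_eq_zero hskew, mul_zero]
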